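/- arXiv:0807.1297 — 5 statements merged into one kernel-verified Lean document; each statement's English description precedes it below -/
import Mathlib

section
/- Consider a single-slot auction with two bidders having identical maximum prices m₁ = m₂ = m and values v₁ = v₂ = v with v > m > r ≥ 0 (r the reserve price). Then there exist exactly two feasible stable matchings with a nonempty assignment (each assigning the slot to one bidder at price m), and no bidder-optimal stable matching exists: there is no feasible stable matching (u*,p*,μ*) with u*_i ≥ u_i for every feasible stable matching (u,p,μ) and every bidder i. -/
/-!
A bidder who loses the slot has utility 0, so the pair of the loser and the slot blocks unless the
price has reached the maximum price `m` (paying the value `v` or the reserve `r` is ruled out by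
`r < m < v`). Hence every stable matching with a winner charges `m` and gives the winner `v - m > 0`.
Either bidder can be that winner, so a bidder-optimal matching would have to give both bidders
positive utility, i.e. assign the single slot to both of them.
-/

/-- An auction instance: values `v`, maximum prices `m`, reserve prices `r`. -/
structure Auction (I J : Type) where
  v : I → J → ℝ
  m : I → J → ℝ
  r : I → J → ℝ

/-- A matching `(u, p, μ)` is feasible for an auction. -/
def Feasible {I J : Type} (A : Auction I J) (u : I → ℝ) (p : J → ℝ)
    (μ : I → Option J) : Prop :=
  (∀ i i' j, μ i = some j → μ i' = some j → i = i') ∧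
  (∀ i j, μ i = some j → A.r i j ≤ p j ∧ p j ≤ A.m i j ∧ u i + p j = A.v i j) ∧
  (∀ i, μ i = none → u i = 0) ∧
  (∀ j, (∀ i, μ i ≠ some j) → p j = 0) ∧
  (∀ i, 0 ≤ u i) ∧ (∀ j, 0 ≤ p j)

/-- Stability: every bidder-slot pair satisfies one of the three inequalities. -/
def Stable {I J : Type} (A : Auction I J) (u : I → ℝ) (p : J → ℝ) : Prop :=
  ∀ i j, u i + p j ≥ A.v i j ∨ p j ≥ A.m i j ∨ u i + A.r i j ≥ A.v i j

/-- A blocking pair violates all three stability inequalities. -/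
def Blocking {I J : Type} (A : Auction I J) (u : I → ℝ) (p : J → ℝ)
    (i : I) (j : J) : Prop :=
  u i + p j < A.v i j ∧ p j < A.m i j ∧ u i + A.r i j < A.v i j

/-- A bidder-optimal feasible stable matching. -/
def BidderOptimal {I J : Type} (A : Auction I J) (ustar : I → ℝ) (pstar : J → ℝ)
    (μstar : I → Option J) : Prop :=
  Feasible A ustar pstar μstar ∧ Stable A ustar pstar ∧
  ∀ u p μ, Feasible A u p μ → Stable A u p → ∀ i, u i ≤ ustar i

section

variable {I J : Type} {A : Auction I J} {u : I → ℝ} {p : J → ℝ} {μ : I → Option J}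

theorem Feasible.exists_match_of_pos (hf : Feasible A u p μ) {i : I} (hu : 0 < u i) :
    ∃ j, μ i = some j := by
  cases hμ : μ i with
  | none => exact absurd (hf.2.2.1 i hμ) hu.ne'
  | some j => exact ⟨j, rfl⟩

theorem Feasible.eq_none_of_ne [Subsingleton J] (hf : Feasible A u p μ) {i k : I} {j : J}
    (hi : μ i = some j) (hk : k ≠ i) : μ k = none := by
  cases hμ : μ k with
  | none => rfl
  | some j' => exact absurd (hf.1 k i j (Subsingleton.elim j' j ▸ hμ) hi) hk

theorem Feasible.eq_of_pos [Subsingleton J] (hf : Feasible A u p μ) {i i' : I}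
    (hu : 0 < u i) (hu' : 0 < u i') : i = i' := by
  obtain ⟨j, hj⟩ := hf.exists_match_of_pos hu
  obtain ⟨j', hj'⟩ := hf.exists_match_of_pos hu'
  exact hf.1 i i' j hj (Subsingleton.elim j' j ▸ hj')

theorem Stable.max_le_price (hs : Stable A u p) {k : I} {j : J} (hk : u k = 0)
    (hpv : p j < A.v k j) (hrv : A.r k j < A.v k j) : A.m k j ≤ p j := by
  rcases hs k j with h | h | h
  · rw [hk, zero_add] at h
    exact absurd h hpv.not_ge
  · exact h
  · rw [hk, zero_add] at h
    exact absurd h hrv.not_ge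

theorem not_bidderOptimal_of_pos_of_pos [Subsingleton J] {u₁ u₂ : I → ℝ} {p₁ p₂ : J → ℝ}
    {μ₁ μ₂ : I → Option J} {i₁ i₂ : I} (hne : i₁ ≠ i₂)
    (hf₁ : Feasible A u₁ p₁ μ₁) (hs₁ : Stable A u₁ p₁) (hu₁ : 0 < u₁ i₁)
    (hf₂ : Feasible A u₂ p₂ μ₂) (hs₂ : Stable A u₂ p₂) (hu₂ : 0 < u₂ i₂) :
    ¬ BidderOptimal A u p μ := by
  rintro ⟨hf, -, hopt⟩
  exact hne (hf.eq_of_pos (hu₁.trans_le (hopt _ _ _ hf₁ hs₁ i₁))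
    (hu₂.trans_le (hopt _ _ _ hf₂ hs₂ i₂)))

end

namespace Auction

def uniform (I J : Type) (v m r : ℝ) : Auction I J :=
  ⟨fun _ _ => v, fun _ _ => m, fun _ _ => r⟩

variable {I J : Type} [DecidableEq I] {v m r : ℝ}

def assignSlotTo (i : I) : I → Option Unit :=
  fun i' => if i' = i then some () else none

def onlyAt (i : I) (x : ℝ) : I → ℝ :=
  fun i' => if i' = i then x else 0

theorem feasible_assignSlotTo (i : I) (hrm : r ≤ m) (hm : 0 ≤ m) (hmv : m ≤ v) :
    Feasible (uniform I Unit v m r) (onlyAt i (v - m)) (fun _ => m) (assignSlotTo i) := by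
  refine ⟨?_, ?_, ?_, ?_, ?_, fun _ => hm⟩
  · intro a b _ ha hb
    simp only [assignSlotTo, ite_eq_left_iff, reduceCtorEq, imp_false, not_not] at ha hb
    rw [ha, hb]
  · intro a _ ha
    simp only [assignSlotTo, ite_eq_left_iff, reduceCtorEq, imp_false, not_not] at ha
    simp [uniform, onlyAt, ha, hrm]
  · intro a ha
    simp only [assignSlotTo, ite_eq_right_iff, reduceCtorEq, imp_false] at ha
    simp [onlyAt, ha]
  · intro _ h
    exact absurd (h i) (by simp [assignSlotTo])
  · intro a
    unfold onlyAt
    split_ifs <;> linarith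

theorem stable_assignSlotTo (i : I) :
    Stable (uniform I J v m r) (onlyAt i (v - m)) (fun _ => m) := by
  intro a _
  by_cases ha : a = i
  · left
    simp [uniform, onlyAt, ha]
  · exact Or.inr (Or.inl le_rfl)

theorem eq_assignSlotTo [Nontrivial I] (hmv : m < v) (hrv : r < v)
    {u : I → ℝ} {p : Unit → ℝ} {μ : I → Option Unit}
    (hf : Feasible (uniform I Unit v m r) u p μ) (hs : Stable (uniform I Unit v m r) u p)
    {i : I} (hi : μ i = some ()) :
    μ = assignSlotTo i ∧ u = onlyAt i (v - m) ∧ p = fun _ => m := by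
  have hlose : ∀ k, k ≠ i → μ k = none := fun k hk => hf.eq_none_of_ne hi hk
  obtain ⟨k, hk⟩ := exists_ne i
  obtain ⟨-, hpm, hpay⟩ := hf.2.1 i () hi
  have hp : p () = m :=
    le_antisymm hpm (hs.max_le_price (hf.2.2.1 k (hlose k hk)) (hpm.trans_lt hmv) hrv)
  refine ⟨funext fun a => ?_, funext fun a => ?_, funext fun _ => hp⟩
  · by_cases ha : a = i
    · simp [assignSlotTo, ha, hi]
    · simp [assignSlotTo, ha, hlose a ha]
  · by_cases ha : a = i
    · simp only [uniform] at hpay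
      simp only [onlyAt, ha, if_true]
      linarith
    · simp [onlyAt, ha, hf.2.2.1 a (hlose a ha)]

end Auction

open Auction in
/-- single slot, two identical bidders: exactly two feasible stable
matchings with nonempty assignment, and no bidder-optimal matching exists. -/
theorem two_stable_no_bidder_optimal (v m r : ℝ) (hr : 0 ≤ r) (hrm : r < m)
    (hmv : m < v) :
    let A : Auction (Fin 2) Unit := ⟨fun _ _ => v, fun _ _ => m, fun _ _ => r⟩
    (∀ i : Fin 2,
        Feasible A (fun i' => if i' = i then v - m else 0) (fun _ => m)
          (fun i' => if i' = i then some () else none) ∧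
        Stable A (fun i' => if i' = i then v - m else 0) (fun _ => m)) ∧
    (∀ (u : Fin 2 → ℝ) (p : Unit → ℝ) (μ : Fin 2 → Option Unit),
        Feasible A u p μ → Stable A u p → (∃ i j, μ i = some j) →
        ∃ i : Fin 2, μ = (fun i' => if i' = i then some () else none) ∧
          u = (fun i' => if i' = i then v - m else 0) ∧ p = fun _ => m) ∧
    ¬ ∃ (ustar : Fin 2 → ℝ) (pstar : Unit → ℝ) (μstar : Fin 2 → Option Unit),
        BidderOptimal A ustar pstar μstar := by
  intro A
  have single (i : Fin 2) :
      Feasible A (onlyAt i (v - m)) (fun _ => m) (assignSlotTo i) ∧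
        Stable A (onlyAt i (v - m)) (fun _ => m) :=
    ⟨feasible_assignSlotTo i hrm.le (hr.trans hrm.le) hmv.le, stable_assignSlotTo i⟩
  have winner_pos (i : Fin 2) : 0 < onlyAt i (v - m) i := by
    simp only [onlyAt, if_true]
    linarith
  refine ⟨single, fun u p μ hf hs ⟨i, _, hi⟩ => ⟨i, eq_assignSlotTo hmv (hrm.trans hmv) hf hs hi⟩, ?_⟩
  rintro ⟨_, _, _, hopt⟩
  exact not_bidderOptimal_of_pos_of_pos (by decide : (0 : Fin 2) ≠ 1)
    (single 0).1 (single 0).2 (winner_pos 0) (single 1).1 (single 1).2 (winner_pos 1) hopt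
end

section
/- In the per-impression GSP auction with n > k bidders with distinct bids b_1 > b_2 > ... > b_n > 0 and zero reserve prices, the matching defined by μ = {(1,1),(2,2),...,(k,k)}, prices p_j = b_{j+1} for j = 1,...,k, utilities u_i = M(k−i+1) − b_{i+1} for i ≤ k and u_i = 0 for i > k, is feasible and stable for the max-value encoding v_{i,j} = M(k−j+1), m_{i,j} = b_i, r_{i,j} = 0, where M > b_1. -/
/-- The max-value encoding of per-impression GSP bidders:
`v_{i,j} = M(k-j)` (0-indexed slots), `m_{i,j} = b_i`, `r_{i,j} = 0`. -/
def gspAuction (n k : ℕ) (b : Fin n → ℝ) (M : ℝ) : Auction (Fin n) (Fin k) :=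
  ⟨fun _ j => M * ((k : ℝ) - (j : ℝ)), fun i _ => b i, fun _ _ => 0⟩

/-- the GSP outcome (diagonal assignment, prices equal to the
next-highest bid) is feasible and stable in the max-value encoding. -/
theorem gsp_outcome_feasible_stable (n k : ℕ) (hnk : k < n)
    (b : Fin n → ℝ) (hb : StrictAnti b) (hbpos : ∀ i, 0 < b i)
    (M : ℝ) (hM : b ⟨0, Nat.lt_of_le_of_lt (Nat.zero_le k) hnk⟩ < M) :
    Feasible (gspAuction n k b M)
      (fun i => if h : (i : ℕ) < k then
          M * ((k : ℝ) - (i : ℝ)) - b ⟨(i : ℕ) + 1, by omega⟩ else 0)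
      (fun j => b ⟨(j : ℕ) + 1, by have := j.isLt; omega⟩)
      (fun i => if h : (i : ℕ) < k then some ⟨(i : ℕ), h⟩ else none) ∧
    Stable (gspAuction n k b M)
      (fun i => if h : (i : ℕ) < k then
          M * ((k : ℝ) - (i : ℝ)) - b ⟨(i : ℕ) + 1, by omega⟩ else 0)
      (fun j => b ⟨(j : ℕ) + 1, by have := j.isLt; omega⟩) := by
  have hM0 : 0 < M := lt_trans (hbpos _) hM
  have hble : ∀ i j : Fin n, (i : ℕ) ≤ (j : ℕ) → b j ≤ b i :=
    fun i j h => hb.antitone (Fin.le_def.mpr h)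
  have hbM : ∀ i : Fin n, b i < M :=
    fun i => lt_of_le_of_lt (hble _ i (Nat.zero_le _)) hM
  constructor
  · refine ⟨?_, ?_, ?_, ?_, ?_, ?_⟩
    · intro i i' j hi hi'
      dsimp only at hi hi'
      split at hi <;> simp [Fin.ext_iff] at hi
      split at hi' <;> simp [Fin.ext_iff] at hi'
      exact Fin.ext (hi.trans hi'.symm)
    · intro i j hij
      dsimp only at hij ⊢
      by_cases h : (i : ℕ) < k
      · rw [dif_pos h] at hij
        have hj : j = ⟨(i : ℕ), h⟩ := (Option.some_injective _ hij).symm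
        subst hj
        simp only [gspAuction, dif_pos h]
        refine ⟨(hbpos _).le, ?_, ?_⟩
        · exact hble i ⟨(i : ℕ) + 1, by omega⟩ (Nat.le_succ _)
        · ring
      · rw [dif_neg h] at hij; simp at hij
    · intro i hi
      dsimp only at hi ⊢
      by_cases h : (i : ℕ) < k
      · rw [dif_pos h] at hi; simp at hi
      · rw [dif_neg h]
    · intro j hj
      exfalso
      apply hj ⟨(j : ℕ), lt_trans j.isLt hnk⟩
      dsimp only
      rw [dif_pos (show ((⟨(j : ℕ), lt_trans j.isLt hnk⟩ : Fin n) : ℕ) < k from j.isLt)]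
    · intro i
      dsimp only
      by_cases h : (i : ℕ) < k
      · rw [dif_pos h]
        have h1 : (i : ℝ) + 1 ≤ (k : ℝ) := by exact_mod_cast h
        have h2 := hbM ⟨(i : ℕ) + 1, by omega⟩
        nlinarith
      · rw [dif_neg h]
    · intro j; exact (hbpos _).le
  · intro i j
    dsimp only
    by_cases h : (i : ℕ) < k
    · rcases lt_or_ge (j : ℕ) (i : ℕ) with hji | hij
      · right; left
        simp only [gspAuction]
        refine hble _ i ?_
        show (j : ℕ) + 1 ≤ (i : ℕ)
        omega
      · left
        simp only [gspAuction, dif_pos h]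
        rcases eq_or_lt_of_le hij with heq | hlt
        · have heqf : (⟨(i : ℕ) + 1, by omega⟩ : Fin n)
              = ⟨(j : ℕ) + 1, by have := j.isLt; omega⟩ := Fin.ext (by show (i : ℕ) + 1 = (j : ℕ) + 1; omega)
          have hbeq : b ⟨(i : ℕ) + 1, by omega⟩
              = b ⟨(j : ℕ) + 1, by have := j.isLt; omega⟩ := by rw [heqf]
          have hcast : M * ((k : ℝ) - ((i : Fin n) : ℕ)) = M * ((k : ℝ) - ((j : Fin k) : ℕ)) := by
            rw [show (((i : Fin n) : ℕ) : ℝ) = (((j : Fin k) : ℕ) : ℝ) by exact_mod_cast heq]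
          linarith [hbeq, hcast]
        · have h1 : (i : ℝ) + 1 ≤ (j : ℝ) := by exact_mod_cast hlt
          have h2 := hbM ⟨(i : ℕ) + 1, by omega⟩
          have h3 := hbpos ⟨(j : ℕ) + 1, by have := j.isLt; omega⟩
          nlinarith
    · right; left
      simp only [gspAuction]
      refine hble _ i ?_
      show (j : ℕ) + 1 ≤ (i : ℕ)
      have := j.isLt
      omega
end

section
/- In the per-impression GSP setting (n > k bidders with distinct bids b_1 > ... > b_n > 0, values v_{i,j} = M(k−j+1) with M > b_1, maximum prices m_{i,j} = b_i, zero reserves), any feasible stable matching must have assignment μ = {(1,1),...,(k,k)}: i.e., for each i ≤ k, bidder i is matched to slot i. -/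
/-- any feasible stable matching in the GSP setting assigns
bidder `i` to slot `i` for every `i ≤ k` (0-indexed: `i < k`). -/
theorem gsp_unique_assignment (n k : ℕ) (hnk : k < n)
    (b : Fin n → ℝ) (hb : StrictAnti b) (hbpos : ∀ i, 0 < b i)
    (M : ℝ) (hM : b ⟨0, Nat.lt_of_le_of_lt (Nat.zero_le k) hnk⟩ < M)
    (u : Fin n → ℝ) (p : Fin k → ℝ) (μ : Fin n → Option (Fin k))
    (hfeas : Feasible (gspAuction n k b M) u p μ)
    (hstab : Stable (gspAuction n k b M) u p) :
    ∀ i : Fin n, ∀ h : (i : ℕ) < k, μ i = some ⟨(i : ℕ), h⟩ := by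
  obtain ⟨hinj, hmatch, hnone, hunm, hu0, hp0⟩ := hfeas
  have hM0 : 0 < M := lt_trans (hbpos _) hM
  have hbM : ∀ i : Fin n, b i < M := fun i =>
    lt_of_le_of_lt (hb.antitone (Fin.mk_le_of_le_val (Nat.zero_le _))) hM
  suffices H : ∀ m : ℕ, ∀ i : Fin n, (i : ℕ) < m → ∀ h : (i : ℕ) < k,
      μ i = some ⟨(i : ℕ), h⟩ by
    exact fun i h => H ((i : ℕ) + 1) i (Nat.lt_succ_self _) h
  intro m
  induction m with
  | zero => exact fun i hi => absurd hi (Nat.not_lt_zero _)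
  | succ m ihm =>
    intro i him h
    have ih : ∀ j : Fin n, j < i → ∀ h' : (j : ℕ) < k, μ j = some ⟨(j : ℕ), h'⟩ :=
      fun j hj h' => ihm j (by omega) h'
    by_contra hne
    set si : Fin k := ⟨(i : ℕ), h⟩ with hsi
    -- p si < b i
    have hplt : p si < b i := by
      by_cases hex : ∃ i', μ i' = some si
      · obtain ⟨i', hi'⟩ := hex
        have hne' : i ≠ i' := fun e => hne (e ▸ hi')
        have hlt : i < i' := by
          rcases lt_trichotomy i i' with h1 | h1 | h1
          · exact h1
          · exact absurd h1 hne'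
          · exfalso
            have hk' : (i' : ℕ) < k := lt_trans h1 h
            have := ih i' h1 hk'
            rw [hi'] at this
            have h2 : si = ⟨(i' : ℕ), hk'⟩ := Option.some_injective _ this
            have h3 : (i : ℕ) = (i' : ℕ) := by
              have := congrArg (Fin.val (n := k)) h2; simpa [hsi] using this
            exact absurd (Fin.ext h3) hne'
        have := (hmatch i' si hi').2.1
        exact lt_of_le_of_lt this (hb hlt)
      · push_neg at hex
        have := hunm si hex
        rw [this]; exact hbpos i
    -- u i ≤ M * (k - i - 1) or u i = 0 with k - i ≥ 1
    have hik : (i : ℝ) + 1 ≤ (k : ℝ) := by exact_mod_cast h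
    have huilt : u i < M * ((k : ℝ) - (i : ℝ)) ∧
        u i + p si < M * ((k : ℝ) - (i : ℝ)) := by
      cases hμ : μ i with
      | none =>
        have h0 : u i = 0 := hnone i hμ
        constructor <;> rw [h0] <;> nlinarith [hbM i, hbpos i]
      | some j =>
        have hval := (hmatch i j hμ).2.2
        have hij : (i : ℕ) < (j : ℕ) := by
          rcases lt_trichotomy ((i : ℕ)) ((j : ℕ)) with h1 | h1 | h1
          · exact h1
          · exact absurd (by rw [hμ]; exact congrArg some (Fin.ext h1.symm)) hne
          · exfalso
            have hjn : (j : ℕ) < n := lt_trans j.isLt hnk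
            set i'' : Fin n := ⟨(j : ℕ), hjn⟩ with hi''
            have hlt : i'' < i := h1
            have := ih i'' hlt j.isLt
            have hj' : (⟨(i'' : ℕ), j.isLt⟩ : Fin k) = j := Fin.ext rfl
            rw [hj'] at this
            have := hinj i i'' j hμ this
            have : (i : ℕ) = (j : ℕ) := congrArg Fin.val this
            omega
        have hjr : (i : ℝ) + 1 ≤ (j : ℝ) := by exact_mod_cast hij
        have hpj : 0 ≤ p j := hp0 j
        have hub : u i ≤ M * ((k : ℝ) - (i : ℝ) - 1) := by
          have : u i = M * ((k : ℝ) - (j : ℝ)) - p j := by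
            have := hval; simp only [gspAuction] at this; linarith
          rw [this]; nlinarith
        constructor
        · nlinarith
        · nlinarith [hbM i]
    rcases hstab i si with hs | hs | hs
    · simp only [gspAuction] at hs
      have : ((si : Fin k) : ℝ) = (i : ℝ) := by simp [hsi]
      rw [this] at hs
      linarith [huilt.2]
    · simp only [gspAuction] at hs
      linarith
    · simp only [gspAuction] at hs
      have : ((si : Fin k) : ℝ) = (i : ℝ) := by simp [hsi]
      rw [this] at hs
      linarith [huilt.1]
end

section
/- If the set of feasible stable matchings of an auction is non-empty, closed, bounded (as a subset of utility–price vectors in ℝ^n × ℝ^k), and closed under the lattice operations (componentwise max of utilities with componentwise min of prices yields a feasible stable matching), then there exists a bidder-optimal feasible stable matching, i.e., one whose utility vector componentwise dominates that of every feasible stable matching. -/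
/-- a non-empty compact set of utility–price vectors closed under
the lattice operation (componentwise max of utilities, min of prices) contains
an element whose utility vector dominates all others. -/
theorem lattice_compact_has_optimum (n k : ℕ)
    (S : Set ((Fin n → ℝ) × (Fin k → ℝ)))
    (hne : S.Nonempty) (hcomp : IsCompact S)
    (hlat : ∀ x ∈ S, ∀ y ∈ S,
        ((fun i => max (x.1 i) (y.1 i), fun j => min (x.2 j) (y.2 j)) :
          (Fin n → ℝ) × (Fin k → ℝ)) ∈ S) :
    ∃ z ∈ S, ∀ x ∈ S, ∀ i, x.1 i ≤ z.1 i := by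
  have key : ∀ t : Finset (Fin n), ∃ z ∈ S, ∀ i ∈ t, ∀ x ∈ S, x.1 i ≤ z.1 i := by
    intro t
    induction t using Finset.induction_on with
    | empty => obtain ⟨z, hz⟩ := hne; exact ⟨z, hz, by simp⟩
    | @insert a t _ ih =>
      obtain ⟨z, hzS, hz⟩ := ih
      have hcont : Continuous (fun x : (Fin n → ℝ) × (Fin k → ℝ) => x.1 a) :=
        (continuous_apply a).comp continuous_fst
      obtain ⟨w, hwS, hw⟩ := hcomp.exists_isMaxOn hne hcont.continuousOn
      refine ⟨_, hlat z hzS w hwS, ?_⟩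
      intro i hi x hxS
      rcases Finset.mem_insert.mp hi with h | h
      · subst h
        exact le_max_of_le_right (hw hxS)
      · exact le_max_of_le_left (hz i h x hxS)
  obtain ⟨z, hzS, hz⟩ := key Finset.univ
  exact ⟨z, hzS, fun x hx i => hz i (Finset.mem_univ i) x hx⟩
end

section
/- Let (u,p,μ) be a feasible matching and (u*,p*,μ*) a feasible stable matching for an auction (v,m,r), and let I⁺ = {i : u_i > u*_i}. If a slot j is matched in μ to a bidder i ∈ I⁺, j is matched in μ* to a bidder i' ∉ I⁺, and p_j < m_{i,j} in the matching μ (so p_j ∈ [r_{i,j}, m_{i,j})), then p_j < p*_j. -/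
/-- if slot `j` is matched in a feasible matching `μ` to a bidder
`i` with `u_i > u*_i`, matched in the feasible stable matching `μ*` to a bidder
`i'` with `u_{i'} ≤ u*_{i'}`, and `p_j < m_{i,j}`, then `p_j < p*_j`. -/
theorem price_strictly_lower {I J : Type} (A : Auction I J)
    (u : I → ℝ) (p : J → ℝ) (μ : I → Option J)
    (ustar : I → ℝ) (pstar : J → ℝ) (μstar : I → Option J)
    (hfeas : Feasible A u p μ)
    (hfstar : Feasible A ustar pstar μstar) (hsstar : Stable A ustar pstar)
    (i i' : I) (j : J) (hij : μ i = some j) (hi'j : μstar i' = some j)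
    (hi : ustar i < u i) (hi' : u i' ≤ ustar i')
    (hm : p j < A.m i j) :
    p j < pstar j := by
  obtain ⟨-, hpair, -⟩ := hfeas
  obtain ⟨hr, hmle, heq⟩ := hpair i j hij
  rcases hsstar i j with h | h | h
  · linarith
  · linarith
  · linarith
end
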